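/- Under the ideal setup (V = Θ̃ Π Θ̃(I,I)^{-1} V(I,:), V'V = I_K, Π a rank-K membership matrix with pure index tuple I so Π(I,:) = I_K, Θ̃ diagonal positive, every row of V nonzero, V(I,:) invertible), set S_C = V_{*,1}(I,:), b = 1/√(𝟏'(S_C S_C')^{-1}𝟏) and w = b^{-1} · S_C' (S_C S_C')^{-1}𝟏 / (𝟏'(S_C S_C')^{-1}𝟏). Then for every i ∈ {1,…,n}: if node i is pure (Π(i,k) = 1 for some k) then V_{*,1}(i,:)·w = b, and if node i is not pure then V_{*,1}(i,:)·w ≠ b. -/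

import Mathlib

open Matrix

/-- The Euclidean norm of a row vector. -/
noncomputable def rnorm {m : ℕ} (v : Fin m → ℝ) : ℝ := Real.sqrt (∑ j, v j ^ 2)

/-- Row-wise ℓ₂-normalization of a matrix. -/
noncomputable def rowNormalize {n m : ℕ} (V : Matrix (Fin n) (Fin m) ℝ) :
    Matrix (Fin n) (Fin m) ℝ :=
  Matrix.of fun i j => V i j / rnorm (V i)

/-!
The model writes every row of `V` as a positive multiple of a nonnegative combination
`∑ₖ aᵢₖ • S_C(k,:)` of the normalized corner rows, with `aᵢₖ > 0` exactly when `Π(i,k) > 0`.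
Since `S_C w = b 𝟏`, this gives `V₊(i,:) ⬝ w = b · (∑ₖ aᵢₖ) / ‖∑ₖ aᵢₖ • S_C(k,:)‖`. The rows of the
invertible matrix `S_C` are distinct unit vectors, so by strict convexity of the Euclidean norm
the ratio is `1` when a single weight is positive (a pure node) and exceeds `1` otherwise;
as `b > 0`, the second case gives `V₊(i,:) ⬝ w ≠ b`.
-/

open Finset

section StrictConvex

variable {E ι : Type*} [NormedAddCommGroup E] [NormedSpace ℝ E] [StrictConvexSpace ℝ E]

lemma norm_sum_smul_lt_sum_of_strictConvexSpace {t : Finset ι} {a : ι → ℝ} {z : ι → E}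
    (ha : ∀ k ∈ t, 0 ≤ a k) (hz : ∀ k ∈ t, ‖z k‖ = 1) {k₁ k₂ : ι} (hk₁ : k₁ ∈ t)
    (hk₂ : k₂ ∈ t) (hne : z k₁ ≠ z k₂) (ha₁ : 0 < a k₁) (ha₂ : 0 < a k₂) :
    ‖∑ k ∈ t, a k • z k‖ < ∑ k ∈ t, a k := by
  have hA : 0 < ∑ k ∈ t, a k := sum_pos' ha ⟨k₁, hk₁, ha₁⟩
  have hnormalized : ‖∑ k ∈ t, (a k / ∑ l ∈ t, a l) • z k‖ < 1 :=
    norm_sum_lt_of_strictConvexSpace (fun k hk => div_nonneg (ha k hk) hA.le)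
      (by rw [← sum_div, div_self hA.ne']) hk₁ hk₂ hne (div_pos ha₁ hA).ne'
      (div_pos ha₂ hA).ne' (fun k hk => (hz k hk).le)
  simp_rw [div_eq_inv_mul, mul_smul, ← smul_sum, norm_smul, Real.norm_of_nonneg
    (inv_nonneg.2 hA.le)] at hnormalized
  rwa [inv_mul_lt_one₀ hA] at hnormalized

end StrictConvex

section RowNorm

variable {ι : Type*} {m : ℕ}

lemma rnorm_eq_norm_toLp (v : Fin m → ℝ) : rnorm v = ‖WithLp.toLp 2 v‖ := by
  simp [rnorm, EuclideanSpace.norm_eq]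

lemma rnorm_pos {v : Fin m → ℝ} (hv : v ≠ 0) : 0 < rnorm v := by
  rw [rnorm_eq_norm_toLp]
  exact norm_pos_iff.2 (by simpa using hv)

lemma rnorm_smul_of_nonneg {c : ℝ} (hc : 0 ≤ c) (v : Fin m → ℝ) :
    rnorm (c • v) = c * rnorm v := by
  rw [rnorm_eq_norm_toLp, rnorm_eq_norm_toLp, WithLp.toLp_smul, norm_smul,
    Real.norm_of_nonneg hc]

lemma rnorm_sum_smul_lt_sum {t : Finset ι} {a : ι → ℝ} {s : ι → Fin m → ℝ}
    (ha : ∀ k ∈ t, 0 ≤ a k) (hs : ∀ k ∈ t, rnorm (s k) = 1) {k₁ k₂ : ι} (hk₁ : k₁ ∈ t)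
    (hk₂ : k₂ ∈ t) (hne : s k₁ ≠ s k₂) (ha₁ : 0 < a k₁) (ha₂ : 0 < a k₂) :
    rnorm (∑ k ∈ t, a k • s k) < ∑ k ∈ t, a k := by
  rw [rnorm_eq_norm_toLp, WithLp.toLp_sum]
  simp_rw [WithLp.toLp_smul]
  refine norm_sum_smul_lt_sum_of_strictConvexSpace ha (fun k hk => ?_) hk₁ hk₂
    (fun h => hne (WithLp.toLp_injective 2 h)) ha₁ ha₂
  rw [← rnorm_eq_norm_toLp, hs k hk]

end RowNorm

section RowNormalize

variable {n m : ℕ}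

lemma rowNormalize_apply (V : Matrix (Fin n) (Fin m) ℝ) (i : Fin n) :
    rowNormalize V i = (rnorm (V i))⁻¹ • V i := by
  ext j
  simp [rowNormalize, div_eq_inv_mul]

lemma rnorm_rowNormalize {V : Matrix (Fin n) (Fin m) ℝ} {i : Fin n} (hi : V i ≠ 0) :
    rnorm (rowNormalize V i) = 1 := by
  rw [rowNormalize_apply, rnorm_smul_of_nonneg (inv_nonneg.2 (rnorm_pos hi).le),
    inv_mul_cancel₀ (rnorm_pos hi).ne']

lemma rnorm_smul_rowNormalize (V : Matrix (Fin n) (Fin m) ℝ) (i : Fin n) :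
    rnorm (V i) • rowNormalize V i = V i := by
  by_cases hi : V i = 0
  · simp [rowNormalize_apply, hi]
  · rw [rowNormalize_apply, smul_smul, mul_inv_cancel₀ (rnorm_pos hi).ne', one_smul]

lemma rowNormalize_eq_diagonal_mul (V : Matrix (Fin n) (Fin m) ℝ) :
    rowNormalize V = diagonal (fun i => (rnorm (V i))⁻¹) * V := by
  ext i j
  simp [rowNormalize, div_eq_inv_mul]

lemma isUnit_rowNormalize {V : Matrix (Fin n) (Fin n) ℝ} (hV : IsUnit V) :
    IsUnit (rowNormalize V) := by
  have hrow : ∀ i, V i ≠ 0 := fun i h => by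
    simpa [(isUnit_iff_isUnit_det V).1 hV |>.ne_zero] using
      det_eq_zero_of_row_eq_zero i (congrFun h)
  rw [rowNormalize_eq_diagonal_mul]
  refine IsUnit.mul ?_ hV
  rw [isUnit_diagonal]
  exact Pi.isUnit_iff.2 fun i => (inv_ne_zero (rnorm_pos (hrow i)).ne').isUnit

end RowNormalize

section OneClassSVM

variable {ι : Type*} [Fintype ι] [DecidableEq ι] (S : Matrix ι ι ℝ)

noncomputable def svmDual : ι → ℝ := (S * Sᵀ)⁻¹ *ᵥ fun _ => 1

noncomputable def svmOffset : ℝ := (Real.sqrt (∑ k, svmDual S k))⁻¹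

noncomputable def svmNormal : ι → ℝ :=
  (svmOffset S)⁻¹ • ((∑ k, svmDual S k)⁻¹ • (Sᵀ *ᵥ svmDual S))

variable {S}

-- `Real.sqrt_div_self` (`√s / s = (√s)⁻¹`) holds for every real `s`, junk cases `s ≤ 0` included.
lemma mulVec_svmNormal (hS : IsUnit S) : S *ᵥ svmNormal S = fun _ => svmOffset S := by
  have hdual : S *ᵥ (Sᵀ *ᵥ svmDual S) = fun _ => 1 := by
    rw [svmDual, mulVec_mulVec, mulVec_mulVec, mul_nonsing_inv _
      ((isUnit_iff_isUnit_det _).1 (hS.mul ((isUnit_transpose S).2 hS))), one_mulVec]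
  ext k
  simp only [svmNormal, svmOffset, mulVec_smul, hdual, Pi.smul_apply, smul_eq_mul, mul_one,
    inv_inv, ← div_eq_mul_inv, Real.sqrt_div_self]

lemma svmOffset_pos [Nonempty ι] (hS : IsUnit S) : 0 < svmOffset S := by
  have hpd : (S * Sᵀ).PosDef :=
    PosDef.mul_conjTranspose_self S (vecMul_injective_iff_isUnit.2 hS)
  have hsum : 0 < ∑ k, svmDual S k := by
    simpa [svmDual, dotProduct] using
      hpd.inv.dotProduct_mulVec_pos (x := fun _ => (1 : ℝ))
        (Function.ne_iff.2 ⟨Classical.arbitrary ι, one_ne_zero⟩)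
  exact inv_pos.2 (Real.sqrt_pos.2 hsum)

end OneClassSVM

section StochasticRow

variable {ι : Type*} [Fintype ι] [DecidableEq ι] {p : ι → ℝ}

lemma eq_zero_of_sum_eq_one_of_eq_one (hp : ∀ k, 0 ≤ p k) (hsum : ∑ k, p k = 1) {k : ι}
    (hk : p k = 1) {l : ι} (hl : l ≠ k) : p l = 0 := by
  have hrest : ∑ j ∈ univ.erase k, p j = 0 := by
    linarith [add_sum_erase univ p (mem_univ k)]
  exact (sum_eq_zero_iff_of_nonneg fun j _ => hp j).1 hrest l (mem_erase.2 ⟨hl, mem_univ l⟩)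

lemma exists_ne_pos_pos_of_sum_eq_one (hp : ∀ k, 0 ≤ p k) (hsum : ∑ k, p k = 1)
    (hmixed : ¬ ∃ k, p k = 1) : ∃ k₁ k₂, k₁ ≠ k₂ ∧ 0 < p k₁ ∧ 0 < p k₂ := by
  obtain ⟨k₁, -, hk₁⟩ : ∃ k ∈ univ, (0 : ℝ) < p k :=
    exists_lt_of_sum_lt (by simp [hsum])
  have hlt : p k₁ < 1 := (hsum ▸ single_le_sum (fun k _ => hp k) (mem_univ k₁)).lt_of_ne
    fun h => hmixed ⟨k₁, h⟩
  obtain ⟨k₂, hk₂, hk₂pos⟩ : ∃ k ∈ univ.erase k₁, (0 : ℝ) < p k :=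
    exists_lt_of_sum_lt (by
      rw [sum_const_zero]; linarith [add_sum_erase univ p (mem_univ k₁)])
  exact ⟨k₁, k₂, (ne_of_mem_erase hk₂).symm, hk₁, hk₂pos⟩

end StochasticRow

section IdealModel

variable {n K : ℕ} (Pim V : Matrix (Fin n) (Fin K) ℝ) (I : Fin K → Fin n) (θ : Fin n → ℝ)

noncomputable def cornerWeight (i : Fin n) (k : Fin K) : ℝ :=
  Pim i k * (rnorm (V (I k)) / θ (I k))

variable {Pim V I θ}

lemma row_eq_smul_sum_cornerWeight
    (hVdef : V = diagonal θ * Pim * (diagonal (fun k => (θ (I k))⁻¹) * V.submatrix I id))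
    (i : Fin n) :
    V i = θ i • ∑ k, cornerWeight Pim V I θ i k • rowNormalize V (I k) := by
  ext l
  have hentry := congrFun (congrFun hVdef i) l
  rw [mul_apply] at hentry
  simp only [diagonal_mul, submatrix_apply, id] at hentry
  simp only [hentry, Pi.smul_apply, Finset.sum_apply, smul_eq_mul, mul_sum, cornerWeight]
  refine sum_congr rfl fun k _ => ?_
  rw [← congrFun (rnorm_smul_rowNormalize V (I k)) l, Pi.smul_apply, smul_eq_mul]
  ring

lemma sum_cornerWeight_smul_ne_zero
    (hVdef : V = diagonal θ * Pim * (diagonal (fun k => (θ (I k))⁻¹) * V.submatrix I id))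
    {i : Fin n} (hi : V i ≠ 0) :
    ∑ k, cornerWeight Pim V I θ i k • rowNormalize V (I k) ≠ 0 := fun h =>
  hi (by rw [row_eq_smul_sum_cornerWeight hVdef i, h, smul_zero])

lemma cornerWeight_nonneg {i : Fin n} {k : Fin K} (hp : 0 ≤ Pim i k) (hθ : 0 ≤ θ (I k)) :
    0 ≤ cornerWeight Pim V I θ i k :=
  mul_nonneg hp (div_nonneg (Real.sqrt_nonneg _) hθ)

lemma cornerWeight_pos {i : Fin n} {k : Fin K} (hp : 0 < Pim i k) (hθ : 0 < θ (I k))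
    (hV : V (I k) ≠ 0) : 0 < cornerWeight Pim V I θ i k :=
  mul_pos hp (div_pos (rnorm_pos hV) hθ)

lemma rowNormalize_dotProduct_eq
    (hVdef : V = diagonal θ * Pim * (diagonal (fun k => (θ (I k))⁻¹) * V.submatrix I id))
    {i : Fin n} (hθ : 0 < θ i) {w : Fin K → ℝ} {β : ℝ}
    (hw : ∀ k, rowNormalize V (I k) ⬝ᵥ w = β) :
    rowNormalize V i ⬝ᵥ w = β * ((∑ k, cornerWeight Pim V I θ i k) /
      rnorm (∑ k, cornerWeight Pim V I θ i k • rowNormalize V (I k))) := by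
  have hsum : (∑ k, cornerWeight Pim V I θ i k • rowNormalize V (I k)) ⬝ᵥ w
      = (∑ k, cornerWeight Pim V I θ i k) * β := by
    simp only [sum_dotProduct, smul_dotProduct, hw, smul_eq_mul, sum_mul]
  rw [rowNormalize_apply, row_eq_smul_sum_cornerWeight hVdef i, rnorm_smul_of_nonneg hθ.le,
    smul_dotProduct, smul_dotProduct, hsum, smul_eq_mul, smul_eq_mul, _root_.mul_inv_rev,
    mul_assoc, inv_mul_cancel_left₀ hθ.ne']
  ring

end IdealModel

theorem svm_hyperplane_characterizes_pure_nodes_general {n K : ℕ}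
    (Pim : Matrix (Fin n) (Fin K) ℝ)
    (hnonneg : ∀ i k, 0 ≤ Pim i k)
    (hrowsum : ∀ i, ∑ k, Pim i k = 1)
    (I : Fin K → Fin n)
    (θ : Fin n → ℝ) (hθ : ∀ i, 0 < θ i)
    (V : Matrix (Fin n) (Fin K) ℝ)
    (hVdef : V = Matrix.diagonal θ * Pim *
      (Matrix.diagonal (fun k => (θ (I k))⁻¹) * V.submatrix I id))
    (hrows : ∀ i, V i ≠ 0)
    (hVI : IsUnit (V.submatrix I id)) :
    let Sc := (rowNormalize V).submatrix I id
    let u := (Sc * Scᵀ)⁻¹ *ᵥ fun _ => (1 : ℝ)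
    let b := (Real.sqrt (∑ k, u k))⁻¹
    let w := b⁻¹ • ((∑ k, u k)⁻¹ • (Scᵀ *ᵥ u))
    ∀ i : Fin n,
      ((∃ k, Pim i k = 1) → dotProduct (rowNormalize V i) w = b) ∧
      ((¬ ∃ k, Pim i k = 1) → dotProduct (rowNormalize V i) w ≠ b) := by
  intro Sc u b w i
  have hSc : IsUnit Sc := isUnit_rowNormalize hVI
  have hcorner : ∀ k, rowNormalize V (I k) ⬝ᵥ w = b :=
    fun k => congrFun (mulVec_svmNormal hSc) k
  have hdot := rowNormalize_dotProduct_eq hVdef (hθ i) hcorner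
  refine ⟨fun ⟨k, hk⟩ => ?_, fun hmixed => ?_⟩
  · have hzero : ∀ l ≠ k, cornerWeight Pim V I θ i l = 0 := fun l hl => by
      rw [cornerWeight, eq_zero_of_sum_eq_one_of_eq_one (hnonneg i) (hrowsum i) hk hl, zero_mul]
    have hpos := cornerWeight_pos (hk ▸ one_pos) (hθ (I k)) (hrows (I k))
    rw [hdot, sum_eq_single_of_mem k (mem_univ k) fun l _ => hzero l,
      sum_eq_single_of_mem k (mem_univ k) fun l _ hl => by rw [hzero l hl, zero_smul],
      rnorm_smul_of_nonneg hpos.le, rnorm_rowNormalize (hrows (I k)), mul_one,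
      div_self hpos.ne', mul_one]
  · obtain ⟨k₁, k₂, hne, h₁, h₂⟩ :=
      exists_ne_pos_pos_of_sum_eq_one (hnonneg i) (hrowsum i) hmixed
    have : Nonempty (Fin K) := ⟨k₁⟩
    have hlt := rnorm_sum_smul_lt_sum
      (fun k _ => cornerWeight_nonneg (hnonneg i k) (hθ (I k)).le)
      (fun k _ => rnorm_rowNormalize (hrows (I k))) (mem_univ k₁) (mem_univ k₂)
      ((linearIndependent_rows_of_isUnit hSc).injective.ne hne)
      (cornerWeight_pos h₁ (hθ (I k₁)) (hrows (I k₁)))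
      (cornerWeight_pos h₂ (hθ (I k₂)) (hrows (I k₂)))
    rw [hdot]
    exact (lt_mul_of_one_lt_right (svmOffset_pos hSc)
      ((one_lt_div (rnorm_pos (sum_cornerWeight_smul_ne_zero hVdef (hrows i)))).2 hlt)).ne'

/-- **one-class SVM separates pure from mixed nodes.** Under the ideal setup,
with `S_C = V₊(I,:)`, `b = 1/√(𝟏'(S_C S_C')⁻¹𝟏)` and
`w = b⁻¹ · S_C' (S_C S_C')⁻¹𝟏 / (𝟏'(S_C S_C')⁻¹𝟏)`, a node `i` is pure
(`Π(i,k) = 1` for some `k`) if and only if `V₊(i,:)·w = b`: pure nodes attain equality and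
non-pure nodes do not. -/
theorem svm_hyperplane_characterizes_pure_nodes {n K : ℕ} (hK : 1 ≤ K) (hKn : K ≤ n)
    (Pim : Matrix (Fin n) (Fin K) ℝ)
    (hnonneg : ∀ i k, 0 ≤ Pim i k)
    (hrowsum : ∀ i, ∑ k, Pim i k = 1)
    (hrank : Pim.rank = K)
    (I : Fin K → Fin n)
    (hpure : ∀ k l, Pim (I k) l = if l = k then (1 : ℝ) else 0)
    (θ : Fin n → ℝ) (hθ : ∀ i, 0 < θ i)
    (V : Matrix (Fin n) (Fin K) ℝ)
    (hVorth : Vᵀ * V = 1)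
    (hVdef : V = Matrix.diagonal θ * Pim *
      (Matrix.diagonal (fun k => (θ (I k))⁻¹) * V.submatrix I id))
    (hrows : ∀ i, V i ≠ 0)
    (hVI : IsUnit (V.submatrix I id)) :
    let Sc := (rowNormalize V).submatrix I id
    let u := (Sc * Scᵀ)⁻¹ *ᵥ fun _ => (1 : ℝ)
    let b := (Real.sqrt (∑ k, u k))⁻¹
    let w := b⁻¹ • ((∑ k, u k)⁻¹ • (Scᵀ *ᵥ u))
    ∀ i : Fin n,
      ((∃ k, Pim i k = 1) → dotProduct (rowNormalize V i) w = b) ∧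
      ((¬ ∃ k, Pim i k = 1) → dotProduct (rowNormalize V i) w ≠ b) :=
  svm_hyperplane_characterizes_pure_nodes_general Pim hnonneg hrowsum I θ hθ V hVdef hrows hVI
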